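/- arXiv:1508.00664 — 5 statements merged into one kernel-verified Lean document; each statement's English description precedes it below -/
import Mathlib

section
/- Let N ≥ 1 and let λ_1 ≥ λ_2 ≥ ... ≥ λ_{2N} ≥ 0 be nonnegative reals. Consider all pairings given by injective maps ℓ, k : {1,...,N} → {1,...,2N} with disjoint images covering {1,...,2N} and λ_{ℓ(l)} ≥ λ_{k(l)} for all l, together with power allocations P_1,...,P_N ≥ 0 with ∑ P_l ≤ P/2, and rate R = ∑_{l=1}^N [log(1+P_l λ_{ℓ(l)}²) − log(1+P_l λ_{k(l)}²)]. Then the supremum of R over pairings and power allocations is attained by the pairing ℓ(l) = l, k(l) = 2N−l+1 (pairing strongest with weakest, second strongest with second weakest, etc.), i.e., for any pairing and power allocation there is a power allocation for the best-worst pairing achieving at least the same rate. -/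
/-!
Sort the powers decreasingly. The function `(x, y) ↦ log (1 + x y)` has increasing differences on
the nonnegative quadrant, so by the rearrangement inequality `∑ log (1 + P_l λ_{ℓ(l)}²)` only grows
when the `l`-th largest power is paired with the `l`-th largest of the gains `λ_{ℓ(·)}²`, which is
at most `λ_l²`. Dually `∑ log (1 + P_l λ_{k(l)}²)` only shrinks when the `l`-th largest power is
paired with the `l`-th smallest of the gains `λ_{k(·)}²`, which is at least `λ_{2N-l+1}²`.
-/

open Finset Equiv Function OrderDual

theorem Equiv.Perm.setOf_trans_swap_apply_ne_subset {ι : Type*} [DecidableEq ι] {s : Finset ι}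
    {a : ι} {σ : Perm ι} (hσ : {x | σ x ≠ x} ⊆ ↑(insert a s)) :
    {x | σ.trans (swap a (σ a)) x ≠ x} ⊆ s := by
  intro x hx
  simp only [Ne, Set.mem_ofPred_eq, Equiv.swap_comp_apply] at hx
  split_ifs at hx with h₁ h₂
  · obtain rfl | hax := eq_or_ne x a
    · contradiction
    · exact mem_of_mem_insert_of_ne (hσ fun h ↦ hax <| h.symm.trans h₁) hax
  · exact (hx <| σ.injective h₂.symm).elim
  · exact mem_of_mem_insert_of_ne (hσ hx) (ne_of_apply_ne _ h₂)

section Supermodular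

variable {ι α β : Type*}

def SupermodularOn [LE α] [LE β] (F : α → β → ℝ) (S : Set α) (T : Set β) : Prop :=
  ∀ ⦃x x' y y'⦄, x ∈ S → x' ∈ S → y ∈ T → y' ∈ T → x' ≤ x → y' ≤ y →
    F x y' + F x' y ≤ F x y + F x' y'

theorem SupermodularOn.dual_right [LE α] [LE β] {F : α → β → ℝ} {S : Set α} {T : Set β}
    (hF : SupermodularOn F S T) :
    SupermodularOn (fun x y ↦ -F x (ofDual y)) S (ofDual ⁻¹' T) :=
  fun x x' y y' hx hx' hy hy' hxx' hyy' ↦ by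
    have : F x (ofDual y) + F x' (ofDual y') ≤ F x (ofDual y') + F x' (ofDual y) :=
      hF hx hx' hy' hy hxx' hyy'
    dsimp only
    linarith

variable [LinearOrder α] [LinearOrder β] {F : α → β → ℝ} {S : Set α} {T : Set β}
  {s : Finset ι} {σ : Perm ι} {f : ι → α} {g : ι → β}

/-- The exchange argument of `MonovaryOn.sum_smul_comp_perm_le_sum_smul`, with `F` in place
of `•`. -/
theorem MonovaryOn.sum_comp_perm_le_sum_of_supermodularOn (hF : SupermodularOn F S T)
    (hf : ∀ i ∈ s, f i ∈ S) (hg : ∀ i ∈ s, g i ∈ T) (hfg : MonovaryOn f g s)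
    (hσ : {x | σ x ≠ x} ⊆ s) :
    ∑ i ∈ s, F (f i) (g (σ i)) ≤ ∑ i ∈ s, F (f i) (g i) := by
  classical
  induction s using induction_on_max_value fun i ↦ toLex (g i, f i) generalizing σ with
  | empty => simp
  | insert a s has hamax hind => ?_
  specialize hind (fun i hi ↦ hf i (mem_insert_of_mem hi))
    (fun i hi ↦ hg i (mem_insert_of_mem hi)) (hfg.subset <| subset_insert _ _)
    (Perm.setOf_trans_swap_apply_ne_subset hσ)
  simp_rw [sum_insert has]
  grw [← hind]
  obtain hσa | hσa := eq_or_ne a (σ a)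
  · rw [← hσa, swap_self, trans_refl]
  have hσsymm : σ.symm a ∈ s := by
    have hne : σ.symm a ≠ a := fun h ↦ hσa (σ.symm_apply_eq.1 h)
    exact mem_of_mem_insert_of_ne (hσ (by simpa using hne.symm)) hne
  have hσas : σ a ∈ s := mem_of_mem_insert_of_ne (hσ <| σ.injective.ne hσa.symm) hσa.symm
  simp only [← s.sum_erase_add _ hσsymm, add_comm]
  rw [← add_assoc, ← add_assoc]
  simp only [swap_apply_left, comp_apply, Equiv.coe_trans, apply_symm_apply]
  refine add_le_add (hF (hf _ (mem_insert_self _ _)) (hf _ (mem_insert_of_mem hσsymm))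
    (hg _ (mem_insert_self _ _)) (hg _ (mem_insert_of_mem hσas)) ?_ ?_)
    (sum_congr rfl fun x hx ↦ ?_).le
  · specialize hamax (σ.symm a) hσsymm
    rw [Prod.Lex.toLex_le_toLex] at hamax
    rcases hamax with hamax | hamax
    · exact hfg (mem_insert_of_mem hσsymm) (mem_insert_self _ _) hamax
    · exact hamax.2
  · specialize hamax (σ a) hσas
    rw [Prod.Lex.toLex_le_toLex] at hamax
    rcases hamax with hamax | hamax
    · exact hamax.le
    · exact hamax.1.le
  · rw [mem_erase, Ne, eq_symm_apply] at hx
    rw [swap_apply_of_ne_of_ne hx.1 (σ.injective.ne _)]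
    rintro rfl
    exact has hx.2

theorem AntivaryOn.sum_le_sum_comp_perm_of_supermodularOn (hF : SupermodularOn F S T)
    (hf : ∀ i ∈ s, f i ∈ S) (hg : ∀ i ∈ s, g i ∈ T) (hfg : AntivaryOn f g s)
    (hσ : {x | σ x ≠ x} ⊆ s) :
    ∑ i ∈ s, F (f i) (g i) ≤ ∑ i ∈ s, F (f i) (g (σ i)) := by
  have := hfg.dual_right.sum_comp_perm_le_sum_of_supermodularOn hF.dual_right hf hg hσ
  simp only [sum_neg_distrib, neg_le_neg_iff] at this
  exact this

end Supermodular

theorem supermodularOn_log_one_add_mul :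
    SupermodularOn (fun x y : ℝ ↦ Real.log (1 + x * y)) (Set.Ici 0) (Set.Ici 0) := by
  intro x x' y y' hx hx' hy hy' hxx' hyy'
  simp only [Set.mem_Ici] at hx hx' hy hy'
  rw [← Real.log_mul (by positivity) (by positivity),
    ← Real.log_mul (by positivity) (by positivity)]
  refine Real.log_le_log (by positivity) ?_
  nlinarith [mul_nonneg (sub_nonneg.2 hxx') (sub_nonneg.2 hyy')]

section SortedSubfamily

variable {β : Type*} [Preorder β] {m n : ℕ} {c : Fin n → β} {e : Fin m → Fin n}

theorem Antitone.apply_le_of_antitone_comp (hc : Antitone c) (he : Injective e)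
    (hce : Antitone (c ∘ e)) (l : Fin m) (hl : (l : ℕ) < n) : c (e l) ≤ c ⟨l, hl⟩ := by
  obtain ⟨j, hjl, hj⟩ : ∃ j ≤ l, (⟨l, hl⟩ : Fin n) ≤ e j := by
    by_contra! h
    have := card_le_card_of_injOn e (fun j hj ↦ mem_Iio.2 (h j (mem_Iic.1 hj))) he.injOn
    simp at this
  exact (hce hjl).trans (hc hj)

theorem Antitone.le_apply_of_monotone_comp (hc : Antitone c) (he : Injective e)
    (hce : Monotone (c ∘ e)) (l : Fin m) (hl : (l : ℕ) < n) :
    c ⟨n - 1 - l, by omega⟩ ≤ c (e l) := by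
  have hrev : Antitone (toDual ∘ c ∘ Fin.rev) := (hc.comp Fin.rev_anti).dual_right
  have hreve : Antitone ((toDual ∘ c ∘ Fin.rev) ∘ (Fin.rev ∘ e)) := by
    simpa only [comp_def, Fin.rev_rev] using hce.dual_right
  have := hrev.apply_le_of_antitone_comp (Fin.rev_injective.comp he) hreve l hl
  simp only [comp_apply, Fin.rev_rev, toDual_le_toDual] at this
  convert this using 2
  ext
  simp only [Fin.val_rev]
  omega

end SortedSubfamily

section LogSums

variable {m n : ℕ} {q : Fin m → ℝ} {c : Fin n → ℝ} {e : Fin m → Fin n}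

theorem sum_log_one_add_mul_comp_le_of_injective (hq : Antitone q) (hq0 : ∀ l, 0 ≤ q l)
    (hc : Antitone c) (hc0 : ∀ i, 0 ≤ c i) (he : Injective e) (hmn : m ≤ n) :
    ∑ l, Real.log (1 + q l * c (e l)) ≤ ∑ l, Real.log (1 + q l * c ⟨l, l.2.trans_le hmn⟩) := by
  set ρ := Tuple.sort (toDual ∘ c ∘ e)
  have hsorted : Antitone (c ∘ (e ∘ ρ)) := Tuple.monotone_sort (toDual ∘ c ∘ e)
  calc ∑ l, Real.log (1 + q l * c (e l))
      = ∑ l, Real.log (1 + q l * (c ∘ (e ∘ ρ)) (ρ.symm l)) := by simp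
    _ ≤ ∑ l, Real.log (1 + q l * (c ∘ (e ∘ ρ)) l) :=
      (hq.monovary hsorted).monovaryOn _ |>.sum_comp_perm_le_sum_of_supermodularOn
        supermodularOn_log_one_add_mul (fun l _ ↦ hq0 l) (fun l _ ↦ hc0 _) (by simp)
    _ ≤ _ := sum_le_sum fun l _ ↦ by
      have := hq0 l
      have := hc0 (e (ρ l))
      gcongr
      exact hc.apply_le_of_antitone_comp (he.comp ρ.injective) hsorted l _

theorem sum_log_one_add_mul_le_comp_of_injective (hq : Antitone q) (hq0 : ∀ l, 0 ≤ q l)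
    (hc : Antitone c) (hc0 : ∀ i, 0 ≤ c i) (he : Injective e) (hmn : m ≤ n) :
    ∑ l, Real.log (1 + q l * c ⟨n - 1 - l, by omega⟩) ≤ ∑ l, Real.log (1 + q l * c (e l)) := by
  set ρ := Tuple.sort (c ∘ e)
  have hsorted : Monotone (c ∘ (e ∘ ρ)) := Tuple.monotone_sort (c ∘ e)
  calc ∑ l, Real.log (1 + q l * c ⟨n - 1 - l, by omega⟩)
      ≤ ∑ l, Real.log (1 + q l * (c ∘ (e ∘ ρ)) l) := sum_le_sum fun l _ ↦ by
        have := hq0 l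
        have := hc0 ⟨n - 1 - l, by omega⟩
        gcongr
        exact hc.le_apply_of_monotone_comp (he.comp ρ.injective) hsorted l (by omega)
    _ ≤ ∑ l, Real.log (1 + q l * (c ∘ (e ∘ ρ)) (ρ.symm l)) :=
      (hq.antivary hsorted).antivaryOn _ |>.sum_le_sum_comp_perm_of_supermodularOn
        supermodularOn_log_one_add_mul (fun l _ ↦ hq0 l) (fun l _ ↦ hc0 _) (by simp)
    _ = ∑ l, Real.log (1 + q l * c (e l)) := by simp

end LogSums

/-- Theorem 1: for gains `λ_0 ≥ λ_1 ≥ ... ≥ λ_{2N-1} ≥ 0`, any valid OT-pairing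
`(ℓ, k)` with any power allocation `Q` (nonnegative, total at most `P/2`) is
outperformed by the best-worst pairing `ℓ*(l) = l`, `k*(l) = 2N-1-l` under a
suitable power allocation. -/
theorem stmt4 (N : ℕ) (P : ℝ)
    (lam : Fin (2 * N) → ℝ)
    (hmono : ∀ i j : Fin (2 * N), i ≤ j → lam j ≤ lam i)
    (hnn : ∀ i, 0 ≤ lam i)
    (ℓ k : Fin N → Fin (2 * N))
    (hinjl : Function.Injective ℓ) (hinjk : Function.Injective k)
    (Q : Fin N → ℝ) (hQ : ∀ l, 0 ≤ Q l) (hQsum : ∑ l, Q l ≤ P / 2) :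
    ∃ Q' : Fin N → ℝ, (∀ l, 0 ≤ Q' l) ∧ (∑ l, Q' l ≤ P / 2) ∧
      ∑ l, (Real.log (1 + Q l * (lam (ℓ l)) ^ 2)
              - Real.log (1 + Q l * (lam (k l)) ^ 2))
      ≤ ∑ l : Fin N,
          (Real.log (1 + Q' l * (lam ⟨l.val, by have := l.isLt; omega⟩) ^ 2)
            - Real.log (1 + Q' l * (lam ⟨2 * N - 1 - l.val, by have := l.isLt; omega⟩) ^ 2)) := by
  have hc : Antitone fun i ↦ lam i ^ 2 := fun i j hij ↦ pow_le_pow_left₀ (hnn j) (hmono i j hij) 2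
  have hc0 : ∀ i, 0 ≤ lam i ^ 2 := fun i ↦ sq_nonneg _
  set τ := Tuple.sort (toDual ∘ Q)
  have hq : Antitone (Q ∘ τ) := Tuple.monotone_sort (toDual ∘ Q)
  refine ⟨Q ∘ τ, fun l ↦ hQ _, by rwa [comp_def, Equiv.sum_comp τ], ?_⟩
  rw [← Equiv.sum_comp τ, sum_sub_distrib, sum_sub_distrib]
  exact sub_le_sub
    (sum_log_one_add_mul_comp_le_of_injective hq (fun l ↦ hQ _) hc hc0
      (hinjl.comp τ.injective) (by omega))
    (sum_log_one_add_mul_le_comp_of_injective hq (fun l ↦ hQ _) hc hc0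
      (hinjk.comp τ.injective) (by omega))
end

section
/- In an optimal pairing maximizing the total rate, for any pair indices l, j it cannot happen that λ_{ℓ(l)} > λ_{k(l)} > λ_{ℓ(j)} > λ_{k(j)}: if this configuration holds, then swapping k(l) with ℓ(j) (keeping the same power allocation with positive powers) strictly increases the total rate. -/
/-! Only the pairs `l` and `j` change: pair `l` now loses `λ_{ℓ(j)}` instead of the larger
`λ_{k(l)}`, and pair `j` now gains `λ_{k(l)}` instead of the smaller `λ_{ℓ(j)}`. Since
`x ↦ log (1 + P x²)` is strictly increasing for `x > 0`, both terms of the rate strictly grow. -/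

lemma log_one_add_mul_sq_lt_log_one_add_mul_sq {P a b : ℝ} (hP : 0 < P) (ha : 0 < a)
    (hab : a < b) : Real.log (1 + P * a ^ 2) < Real.log (1 + P * b ^ 2) := by
  have hsq : a ^ 2 < b ^ 2 := pow_lt_pow_left₀ hab ha.le two_ne_zero
  exact Real.log_lt_log (by positivity) (by gcongr)

lemma sum_sub_lt_sum_sub_update_swap {ι α : Type*} [Fintype ι] [DecidableEq ι]
    (g : ι → α → ℝ) (u v : ι → α) {l j : ι} (hlj : l ≠ j)
    (hl : g l (u j) < g l (v l)) (hj : g j (u j) < g j (v l)) :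
    ∑ t, (g t (u t) - g t (v t))
      < ∑ t, (g t (Function.update u j (v l) t) - g t (Function.update v l (u j) t)) := by
  have term_l : g l (u l) - g l (v l)
      < g l (Function.update u j (v l) l) - g l (Function.update v l (u j) l) := by
    rw [Function.update_of_ne hlj, Function.update_self]
    linarith
  refine Finset.sum_lt_sum (fun t _ => ?_) ⟨l, Finset.mem_univ l, term_l⟩
  rcases eq_or_ne t l with rfl | htl
  · exact term_l.le
  rcases eq_or_ne t j with rfl | htj
  · rw [Function.update_self, Function.update_of_ne htl]
    linarith
  · rw [Function.update_of_ne htj, Function.update_of_ne htl]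

theorem stmt6_general (N : ℕ) (lam : Fin (2 * N) → ℝ) (hpos : ∀ i, 0 < lam i)
    (ℓ k : Fin N → Fin (2 * N)) (Pw : Fin N → ℝ) (hPw : ∀ l, 0 < Pw l)
    (l j : Fin N) (hlj : l ≠ j)
    (h1 : lam (k l) > lam (ℓ j)) :
    ∑ t : Fin N, (Real.log (1 + Pw t * (lam (ℓ t)) ^ 2)
                    - Real.log (1 + Pw t * (lam (k t)) ^ 2))
    < ∑ t : Fin N,
        (Real.log (1 + Pw t * (lam (Function.update ℓ j (k l) t)) ^ 2)
          - Real.log (1 + Pw t * (lam (Function.update k l (ℓ j) t)) ^ 2)) :=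
  sum_sub_lt_sum_sub_update_swap (fun t x => Real.log (1 + Pw t * lam x ^ 2)) ℓ k hlj
    (log_one_add_mul_sq_lt_log_one_add_mul_sq (hPw l) (hpos _) h1)
    (log_one_add_mul_sq_lt_log_one_add_mul_sq (hPw j) (hpos _) h1)

/-- Lemma 2: if for two pair indices `l ≠ j` we have
`λ_{ℓ(l)} > λ_{k(l)} > λ_{ℓ(j)} > λ_{k(j)}`, then the swap replacing pair `l`
by `(ℓ(l), ℓ(j))` and pair `j` by `(k(l), k(j))` (with the same positive
powers) strictly increases the total rate; hence an optimal pairing cannot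
contain this configuration. -/
theorem stmt6 (N : ℕ) (lam : Fin (2 * N) → ℝ) (hpos : ∀ i, 0 < lam i)
    (ℓ k : Fin N → Fin (2 * N)) (Pw : Fin N → ℝ) (hPw : ∀ l, 0 < Pw l)
    (hord : ∀ l, lam (k l) < lam (ℓ l))
    (l j : Fin N) (hlj : l ≠ j)
    (h1 : lam (k l) > lam (ℓ j)) :
    ∑ t : Fin N, (Real.log (1 + Pw t * (lam (ℓ t)) ^ 2)
                    - Real.log (1 + Pw t * (lam (k t)) ^ 2))
    < ∑ t : Fin N,
        (Real.log (1 + Pw t * (lam (Function.update ℓ j (k l) t)) ^ 2)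
          - Real.log (1 + Pw t * (lam (Function.update k l (ℓ j) t)) ^ 2)) :=
  stmt6_general N lam hpos ℓ k Pw hPw l j hlj h1
end

section
/- For any pairing and positive power allocation at which no single transposition of channel labels strictly increases the rate, if λ_{ℓ(l)} > λ_{ℓ(j)} then λ_{k(l)} ≤ λ_{k(j)}; i.e., the order of strong gains across pairs is reversed by the order of weak gains. -/
/-!
If the strong gains of pairs `l`, `j` satisfy `λ_{ℓ(l)} > λ_{ℓ(j)}`, swapping the strong labels
changes the rate by `g_{P_j} - g_{P_l}`, where `g_P = log((1 + P λ_{ℓ(l)}²)/(1 + P λ_{ℓ(j)}²))`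
is strictly increasing in `P`; so optimality forces `P_j ≤ P_l`. If also `λ_{k(l)} > λ_{k(j)}`, the
same argument for the weak labels forces `P_l ≤ P_j`, contradicting `P_l ≠ P_j`.
-/

open Finset

noncomputable def totalRate {N : ℕ} (lam : Fin (2 * N) → ℝ)
    (ℓ k : Fin N → Fin (2 * N)) (Pw : Fin N → ℝ) : ℝ :=
  ∑ t : Fin N, (Real.log (1 + Pw t * (lam (ℓ t)) ^ 2)
                  - Real.log (1 + Pw t * (lam (k t)) ^ 2))

noncomputable def pairRate (P a b : ℝ) : ℝ :=
  Real.log (1 + P * a ^ 2) - Real.log (1 + P * b ^ 2)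

theorem strictMonoOn_pairRate {a b : ℝ} (hab : b ^ 2 < a ^ 2) :
    StrictMonoOn (fun P => pairRate P a b) (Set.Ici 0) := by
  intro P (hP : 0 ≤ P) Q (hQ : 0 ≤ Q) hPQ
  have hb : 0 < 1 + P * b ^ 2 := by positivity
  have hb' : 0 < 1 + Q * b ^ 2 := by positivity
  simp only [pairRate]
  rw [← Real.log_div (by positivity) hb.ne', ← Real.log_div (by positivity) hb'.ne']
  refine Real.log_lt_log (by positivity) ?_
  rw [div_lt_div_iff₀ hb hb']
  nlinarith [mul_pos (sub_pos.2 hPQ) (sub_pos.2 hab)]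

theorem Fintype.sum_update_swap_sub_sum {α β : Type*} [Fintype α] [DecidableEq α]
    (f : α → β → ℝ) (g : α → β) {l j : α} (hlj : l ≠ j) :
    ∑ t, f t (Function.update (Function.update g l (g j)) j (g l) t) - ∑ t, f t (g t)
      = (f l (g j) - f l (g l)) + (f j (g l) - f j (g j)) := by
  rw [← Finset.sum_sub_distrib, Fintype.sum_eq_add l j hlj]
  · simp only [Function.update_self, Function.update_of_ne hlj]
  · rintro t ⟨htl, htj⟩
    simp only [Function.update_of_ne htl, Function.update_of_ne htj, sub_self]

section Swaps

variable {N : ℕ} (lam : Fin (2 * N) → ℝ) (ℓ k : Fin N → Fin (2 * N)) (Pw : Fin N → ℝ)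
  {l j : Fin N}

theorem totalRate_eq_sum_pairRate :
    totalRate lam ℓ k Pw = ∑ t, pairRate (Pw t) (lam (ℓ t)) (lam (k t)) := rfl

theorem totalRate_swap_strong_sub (hlj : l ≠ j) :
    totalRate lam (Function.update (Function.update ℓ l (ℓ j)) j (ℓ l)) k Pw
        - totalRate lam ℓ k Pw
      = pairRate (Pw j) (lam (ℓ l)) (lam (ℓ j)) - pairRate (Pw l) (lam (ℓ l)) (lam (ℓ j)) := by
  simp only [totalRate_eq_sum_pairRate]
  rw [Fintype.sum_update_swap_sub_sum (fun t i => pairRate (Pw t) (lam i) (lam (k t))) ℓ hlj]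
  simp only [pairRate]
  ring

theorem totalRate_swap_weak_sub (hlj : l ≠ j) :
    totalRate lam ℓ (Function.update (Function.update k l (k j)) j (k l)) Pw
        - totalRate lam ℓ k Pw
      = pairRate (Pw l) (lam (k l)) (lam (k j)) - pairRate (Pw j) (lam (k l)) (lam (k j)) := by
  simp only [totalRate_eq_sum_pairRate]
  rw [Fintype.sum_update_swap_sub_sum (fun t i => pairRate (Pw t) (lam (ℓ t)) (lam i)) k hlj]
  simp only [pairRate]
  ring

end Swaps

theorem stmt8_general (N : ℕ) (lam : Fin (2 * N) → ℝ) (hpos : ∀ i, 0 < lam i)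
    (ℓ k : Fin N → Fin (2 * N))
    (Pw : Fin N → ℝ) (hPw : ∀ t, 0 < Pw t)
    (hPdist : ∀ t s : Fin N, t ≠ s → Pw t ≠ Pw s)
    (hswap_strong : ∀ l j : Fin N,
      totalRate lam (Function.update (Function.update ℓ l (ℓ j)) j (ℓ l)) k Pw
        ≤ totalRate lam ℓ k Pw)
    (hswap_weak : ∀ l j : Fin N,
      totalRate lam ℓ (Function.update (Function.update k l (k j)) j (k l)) Pw
        ≤ totalRate lam ℓ k Pw) :
    ∀ l j : Fin N, lam (ℓ l) > lam (ℓ j) → lam (k l) ≤ lam (k j) := by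
  intro l j hℓ
  by_contra! hk
  have hlj : l ≠ j := fun h => hℓ.ne' (by rw [h])
  have hPl : Pw l ∈ Set.Ici 0 := (hPw l).le
  have hPj : Pw j ∈ Set.Ici 0 := (hPw j).le
  have hℓ2 : lam (ℓ j) ^ 2 < lam (ℓ l) ^ 2 := pow_lt_pow_left₀ hℓ (hpos _).le two_ne_zero
  have hk2 : lam (k j) ^ 2 < lam (k l) ^ 2 := pow_lt_pow_left₀ hk (hpos _).le two_ne_zero
  have hPjl : Pw j ≤ Pw l := ((strictMonoOn_pairRate hℓ2).le_iff_le hPj hPl).1 <| by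
    linarith [totalRate_swap_strong_sub lam ℓ k Pw hlj, hswap_strong l j]
  have hPlj : Pw l ≤ Pw j := ((strictMonoOn_pairRate hk2).le_iff_le hPl hPj).1 <| by
    linarith [totalRate_swap_weak_sub lam ℓ k Pw hlj, hswap_weak l j]
  exact hPdist l j hlj (le_antisymm hPlj hPjl)

/-- Lemma 4: at a pairing with distinct positive gains, pairwise-distinct
positive powers, where no single transposition of channel labels (swapping the
strong labels of two pairs, swapping the weak labels of two pairs, or the cross
swap exchanging `k(l)` with `ℓ(j)`) strictly increases the rate, the order of
strong gains is reversed by the order of weak gains: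
`λ_{ℓ(l)} > λ_{ℓ(j)} → λ_{k(l)} ≤ λ_{k(j)}`. -/
theorem stmt8 (N : ℕ) (lam : Fin (2 * N) → ℝ) (hpos : ∀ i, 0 < lam i)
    (hdist : Function.Injective lam)
    (ℓ k : Fin N → Fin (2 * N)) (hord : ∀ t, lam (k t) < lam (ℓ t))
    (Pw : Fin N → ℝ) (hPw : ∀ t, 0 < Pw t)
    (hPdist : ∀ t s : Fin N, t ≠ s → Pw t ≠ Pw s)
    (hswap_strong : ∀ l j : Fin N,
      totalRate lam (Function.update (Function.update ℓ l (ℓ j)) j (ℓ l)) k Pw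
        ≤ totalRate lam ℓ k Pw)
    (hswap_weak : ∀ l j : Fin N,
      totalRate lam ℓ (Function.update (Function.update k l (k j)) j (k l)) Pw
        ≤ totalRate lam ℓ k Pw)
    (hswap_cross : ∀ l j : Fin N,
      totalRate lam (Function.update ℓ j (k l)) (Function.update k l (ℓ j)) Pw
        ≤ totalRate lam ℓ k Pw) :
    ∀ l j : Fin N, lam (ℓ l) > lam (ℓ j) → lam (k l) ≤ lam (k j) :=
  stmt8_general N lam hpos ℓ k Pw hPw hPdist hswap_strong hswap_weak
end

section
/- Fix λ > λ' > 0 and η > 0. The function J(P) = log(1+Pλ²) − log(1+Pλ'²) − ηP over P ≥ 0 is maximized at P* = max(0, √(f(λ,λ',η)) − (1/2)(1/λ² + 1/λ'²)), where f(λ,λ',η) = (1/4)(1/λ'² − 1/λ²)[(1/λ'² − 1/λ²) + 4/η]. -/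
/-!
With `a = 1/λ²` and `b = 1/λ'²`, `J(P) = log(a + P) - log(b + P) - ηP + log(λ²/λ'²)`, whose derivative
`(b - a)/((a + P)(b + P)) - η` is nonnegative exactly when `(a + P)(b + P) ≤ (b - a)/η`, i.e. when
`(P + (a + b)/2)² ≤ (b - a)²/4 + (b - a)/η = f`. So `J` increases up to `√f - (a + b)/2` and
decreases after it, and the maximum over `P ≥ 0` is at the clipped point `P*`.
-/

open Real Set

theorem isMaxOn_Ici_of_deriv_nonneg_of_deriv_nonpos {f f' : ℝ → ℝ} {a p : ℝ} (hap : a ≤ p)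
    (hf : ContinuousOn f (Ici a)) (hf' : ∀ x ∈ Ioi a, HasDerivAt f (f' x) x)
    (hpos : ∀ x ∈ Ioo a p, 0 ≤ f' x) (hneg : ∀ x ∈ Ioi p, f' x ≤ 0) :
    IsMaxOn f (Ici a) p := by
  have hmono : MonotoneOn f (Icc a p) := by
    refine monotoneOn_of_hasDerivWithinAt_nonneg (f' := f') (convex_Icc a p)
      (hf.mono Icc_subset_Ici_self) (fun x hx => ?_) (fun x hx => ?_)
    · rw [interior_Icc] at hx
      exact (hf' x hx.1).hasDerivWithinAt
    · rw [interior_Icc] at hx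
      exact hpos x hx
  have hanti : AntitoneOn f (Ici p) := by
    refine antitoneOn_of_hasDerivWithinAt_nonpos (f' := f') (convex_Ici p)
      (hf.mono (Ici_subset_Ici.mpr hap)) (fun x hx => ?_) (fun x hx => ?_)
    · rw [interior_Ici] at hx
      exact (hf' x (hap.trans_lt hx)).hasDerivWithinAt
    · rw [interior_Ici] at hx
      exact hneg x hx
  intro x (hx : a ≤ x)
  rcases le_total x p with hxp | hpx
  · exact hmono ⟨hx, hxp⟩ ⟨hap, le_rfl⟩ hxp
  · exact hanti self_mem_Ici hpx hpx

theorem log_one_add_mul_eq_log_add_log_inv_add {c P : ℝ} (hc : 0 < c) (hP : 0 ≤ P) :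
    log (1 + P * c) = log c + log (1 / c + P) := by
  rw [← log_mul hc.ne' (by positivity)]
  congr 1
  field_simp

section LogRatio

variable {a b η : ℝ}

theorem hasDerivAt_log_add_sub_log_add_sub_mul {x : ℝ} (ha : 0 < a + x) (hb : 0 < b + x) :
    HasDerivAt (fun P => log (a + P) - log (b + P) - η * P)
      (1 / (a + x) - 1 / (b + x) - η) x := by
  have hlog : ∀ {c : ℝ}, 0 < c + x → HasDerivAt (fun P => log (c + P)) (1 / (c + x)) x :=
    fun hc => by simpa using ((hasDerivAt_id x).const_add _).log hc.ne'
  simpa using ((hlog ha).fun_sub (hlog hb)).fun_sub ((hasDerivAt_id x).const_mul η)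

theorem one_div_add_sub_one_div_add_sub_nonneg_iff (ha : 0 < a) (hab : a < b) (hη : 0 < η)
    {x : ℝ} (hx : 0 ≤ x) :
    0 ≤ 1 / (a + x) - 1 / (b + x) - η ↔
      x ≤ √(1 / 4 * (b - a) * ((b - a) + 4 / η)) - 1 / 2 * (a + b) := by
  have hax : 0 < a + x := by linarith
  have hbx : 0 < b + x := by linarith
  have hD : 0 < (a + x) * (b + x) := mul_pos hax hbx
  have hcenter : 0 ≤ x + 1 / 2 * (a + b) := by linarith
  have hnumer : 1 / (a + x) - 1 / (b + x) - η =
      η * (1 / 4 * (b - a) * ((b - a) + 4 / η) - (x + 1 / 2 * (a + b)) ^ 2) /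
        ((a + x) * (b + x)) := by
    field_simp
    ring
  rw [hnumer, le_div_iff₀ hD, zero_mul, mul_nonneg_iff_of_pos_left hη, sub_nonneg,
    le_sub_iff_add_le, le_sqrt hcenter (by positivity)]

theorem isMaxOn_log_add_sub_log_add_sub_mul (ha : 0 < a) (hab : a < b) (hη : 0 < η) :
    IsMaxOn (fun P => log (a + P) - log (b + P) - η * P) (Ici 0)
      (max 0 (√(1 / 4 * (b - a) * ((b - a) + 4 / η)) - 1 / 2 * (a + b))) := by
  have hderiv : ∀ x ∈ Ici (0 : ℝ), HasDerivAt (fun P => log (a + P) - log (b + P) - η * P)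
      (1 / (a + x) - 1 / (b + x) - η) x := fun x (hx : 0 ≤ x) =>
    hasDerivAt_log_add_sub_log_add_sub_mul (by linarith) (by linarith)
  refine isMaxOn_Ici_of_deriv_nonneg_of_deriv_nonpos (le_max_left _ _)
    (fun x hx => (hderiv x hx).continuousAt.continuousWithinAt)
    (fun x hx => hderiv x (mem_Ioi.mp hx).le) (fun x hx => ?_) (fun x hx => ?_)
  · rw [one_div_add_sub_one_div_add_sub_nonneg_iff ha hab hη hx.1.le]
    exact ((lt_max_iff.mp hx.2).resolve_left hx.1.not_gt).le
  · have hx0 : 0 < x := (le_max_left _ _).trans_lt hx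
    refine le_of_not_ge fun hnonneg => ?_
    rw [one_div_add_sub_one_div_add_sub_nonneg_iff ha hab hη hx0.le] at hnonneg
    exact (max_lt_iff.mp hx).2.not_ge hnonneg

end LogRatio

/-- For `λ > λ' > 0` and `η > 0`, the function
`J(P) = log(1+Pλ²) − log(1+Pλ'²) − ηP` on `P ≥ 0` is maximized at
`P* = max(0, √(f(λ,λ',η)) − (1/2)(1/λ² + 1/λ'²))` where
`f(λ,λ',η) = (1/4)(1/λ'² − 1/λ²)[(1/λ'² − 1/λ²) + 4/η]`. -/
theorem stmt11 (lam lam' η : ℝ) (h' : 0 < lam') (h : lam' < lam) (hη : 0 < η) :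
    ∀ Q ∈ Set.Ici (0 : ℝ),
      Real.log (1 + Q * lam ^ 2) - Real.log (1 + Q * lam' ^ 2) - η * Q
      ≤ (let Pstar := max 0
            (Real.sqrt ((1 / 4) * (1 / lam' ^ 2 - 1 / lam ^ 2) *
                ((1 / lam' ^ 2 - 1 / lam ^ 2) + 4 / η))
              - (1 / 2) * (1 / lam ^ 2 + 1 / lam' ^ 2));
          Real.log (1 + Pstar * lam ^ 2) - Real.log (1 + Pstar * lam' ^ 2)
            - η * Pstar) := by
  intro Q hQ
  have hlam : 0 < lam ^ 2 := pow_pos (h'.trans h) 2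
  have hlam' : 0 < lam' ^ 2 := pow_pos h' 2
  have hab : 1 / lam ^ 2 < 1 / lam' ^ 2 := one_div_lt_one_div_of_lt hlam' (by nlinarith)
  have hmax := isMaxOn_iff.mp
    (isMaxOn_log_add_sub_log_add_sub_mul (one_div_pos.mpr hlam) hab hη) Q hQ
  have hPstar := le_max_left 0
    (√(1 / 4 * (1 / lam' ^ 2 - 1 / lam ^ 2) * ((1 / lam' ^ 2 - 1 / lam ^ 2) + 4 / η))
      - 1 / 2 * (1 / lam ^ 2 + 1 / lam' ^ 2))
  simp only [log_one_add_mul_eq_log_add_log_inv_add hlam hQ,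
    log_one_add_mul_eq_log_add_log_inv_add hlam' hQ,
    log_one_add_mul_eq_log_add_log_inv_add hlam hPstar,
    log_one_add_mul_eq_log_add_log_inv_add hlam' hPstar]
  linarith
end

section
/- If S = max(E₁,E₂) and T = min(E₁,E₂) with E₁,E₂ i.i.d. exponential(1), then the limit as P → ∞ of E[log(1+(P/2)S) − log(1+(P/2)T)] equals E[log(S/T)] = 2 ln 2. -/
/-!
For `T ≤ S` and `a ≥ 0`, `log (1 + a S) - log (1 + a T)` lies between `0` and `log (S / T)` and
tends to `log (S / T)` as `a → ∞`, so dominated convergence reduces the limit to `E[log (S / T)]`.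
Writing `log (S / T) = log E₁ + log E₂ - 2 log T`, and using that `T = min E₁ E₂` is exponential
of rate `2`, i.e. distributed as `E₁ / 2`, gives `E[log (S / T)] = 2 E[log E₁] - 2 (E[log E₁] - log 2)
= 2 log 2`. All logarithms are integrable because `|log x| ≤ 2 x^(-1/2) + x`.
-/

open MeasureTheory ProbabilityTheory Filter Real Set Topology

theorem MeasureTheory.Measure.ext_of_Ioi {μ ν : Measure ℝ} [IsProbabilityMeasure μ]
    [IsProbabilityMeasure ν] (h : ∀ a, μ (Ioi a) = ν (Ioi a)) : μ = ν :=
  Measure.ext_of_Iic μ ν fun a => by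
    rw [← compl_Ioi, prob_compl_eq_one_sub measurableSet_Ioi,
      prob_compl_eq_one_sub measurableSet_Ioi, h]

theorem Real.abs_log_le_two_mul_rpow_neg_half_add_self {x : ℝ} (hx : 0 < x) :
    |log x| ≤ 2 * x ^ (-(1 / 2) : ℝ) + x := by
  have hneg : -log x ≤ 2 * x ^ (-(1 / 2) : ℝ) := by
    have := log_le_rpow_div (inv_pos.mpr hx).le (by norm_num : (0 : ℝ) < 1 / 2)
    rwa [log_inv, inv_rpow hx.le, ← rpow_neg hx.le, div_eq_mul_inv, one_div, inv_inv, mul_comm,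
      ← one_div] at this
  rw [abs_le]
  constructor <;> nlinarith [log_le_self hx.le, rpow_pos_of_pos hx (-(1 / 2))]

theorem Real.log_max_div_min {x y : ℝ} (hx : 0 < x) (hy : 0 < y) :
    log (max x y / min x y) = log x + log y - 2 * log (min x y) := by
  rcases le_total x y with h | h
  · rw [max_eq_right h, min_eq_left h, log_div hy.ne' hx.ne']
    ring
  · rw [max_eq_left h, min_eq_right h, log_div hx.ne' hy.ne']
    ring

theorem Real.abs_log_one_add_mul_sub_log_one_add_mul_le {a s t : ℝ} (ha : 0 ≤ a) (ht : 0 < t)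
    (hts : t ≤ s) : |log (1 + a * s) - log (1 + a * t)| ≤ log (s / t) := by
  have hs : 0 < s := ht.trans_le hts
  have hat : 0 < 1 + a * t := by positivity
  have has : 1 + a * t ≤ 1 + a * s := by gcongr
  rw [abs_of_nonneg (sub_nonneg.mpr (log_le_log hat has)), ← log_div (by positivity) hat.ne']
  refine log_le_log (by positivity) ?_
  rw [div_le_div_iff₀ hat ht]
  nlinarith

theorem Real.tendsto_log_one_add_mul_sub_log_one_add_mul {s t : ℝ} (hs : 0 < s) (ht : 0 < t) :
    Tendsto (fun a => log (1 + a * s) - log (1 + a * t)) atTop (𝓝 (log (s / t))) := by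
  have hinv : Tendsto (fun a : ℝ => a⁻¹) atTop (𝓝 0) := tendsto_inv_atTop_zero
  have hquot := (hinv.add_const s).div (hinv.add_const t) (by simpa using ht.ne')
  rw [zero_add, zero_add] at hquot
  refine ((continuousAt_log (div_pos hs ht).ne').tendsto.comp hquot).congr' ?_
  filter_upwards [eventually_gt_atTop 0] with a ha
  rw [Function.comp_apply, Pi.div_apply, ← log_div (by positivity) (by positivity)]
  congr 1
  field_simp

namespace ProbabilityTheory

variable {r : ℝ}

theorem expMeasure_Iic_zero (hr : 0 < r) : expMeasure r (Iic 0) = 0 := by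
  have := isProbabilityMeasure_expMeasure hr
  simp [← ofReal_cdf, cdf_expMeasure_eq hr]

theorem ae_pos_expMeasure (hr : 0 < r) : ∀ᵐ x ∂expMeasure r, 0 < x :=
  ae_iff.mpr <| measure_mono_null (fun _ hx => not_lt.mp hx) (expMeasure_Iic_zero hr)

theorem expMeasure_Ioi (hr : 0 < r) (a : ℝ) :
    expMeasure r (Ioi a) = ENNReal.ofReal (exp (-(r * max a 0))) := by
  have := isProbabilityMeasure_expMeasure hr
  rw [← compl_Iic, prob_compl_eq_one_sub measurableSet_Iic, ← ofReal_cdf, ← ENNReal.ofReal_one,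
    ← ENNReal.ofReal_sub _ (cdf_nonneg _ _), cdf_expMeasure_eq hr]
  rcases le_or_gt 0 a with ha | ha
  · rw [if_pos ha, max_eq_left ha, sub_sub_cancel]
  · rw [if_neg ha.not_ge, max_eq_right ha.le]
    simp

theorem map_div_expMeasure (hr : 0 < r) {c : ℝ} (hc : 0 < c) :
    (expMeasure r).map (· / c) = expMeasure (c * r) := by
  have := isProbabilityMeasure_expMeasure hr
  have := Measure.isProbabilityMeasure_map (μ := expMeasure r) (f := (· / c)) (by fun_prop)
  have := isProbabilityMeasure_expMeasure (mul_pos hc hr)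
  refine Measure.ext_of_Ioi fun a => ?_
  have hpre : (· / c) ⁻¹' Ioi a = Ioi (c * a) := by
    ext x
    simp [lt_div_iff₀ hc, mul_comm]
  rw [Measure.map_apply (by fun_prop) measurableSet_Ioi, hpre, expMeasure_Ioi hr,
    expMeasure_Ioi (mul_pos hc hr),
    show max (c * a) 0 = c * max a 0 by rw [mul_max_of_nonneg _ _ hc.le, mul_zero]]
  ring_nf

theorem IndepFun.map_min_eq_expMeasure {Ω : Type*} [MeasurableSpace Ω] {μ : Measure Ω}
    [IsProbabilityMeasure μ] {X Y : Ω → ℝ} {s : ℝ} (hX : Measurable X) (hY : Measurable Y)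
    (hXY : IndepFun X Y μ) (hr : 0 < r) (hs : 0 < s)
    (hXlaw : μ.map X = expMeasure r) (hYlaw : μ.map Y = expMeasure s) :
    μ.map (fun ω => min (X ω) (Y ω)) = expMeasure (r + s) := by
  have := Measure.isProbabilityMeasure_map (μ := μ) (hX.min hY).aemeasurable
  have := isProbabilityMeasure_expMeasure (add_pos hr hs)
  refine Measure.ext_of_Ioi fun a => ?_
  have hpre : (fun ω => min (X ω) (Y ω)) ⁻¹' Ioi a = X ⁻¹' Ioi a ∩ Y ⁻¹' Ioi a := by
    ext ω
    simp
  rw [Measure.map_apply (hX.min hY) measurableSet_Ioi, hpre,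
    hXY.measure_inter_preimage_eq_mul _ _ measurableSet_Ioi measurableSet_Ioi,
    ← Measure.map_apply hX measurableSet_Ioi, ← Measure.map_apply hY measurableSet_Ioi,
    hXlaw, hYlaw, expMeasure_Ioi hr, expMeasure_Ioi hs, expMeasure_Ioi (add_pos hr hs),
    ← ENNReal.ofReal_mul (exp_pos _).le, ← exp_add]
  ring_nf

theorem integrable_expMeasure_of_integrableOn (hr : 0 < r) {f : ℝ → ℝ}
    (hf : IntegrableOn (fun x => f x * exp (-(r * x))) (Ioi 0)) : Integrable f (expMeasure r) := by
  have hpdf : (fun x => f x * (exponentialPDF r x).toReal)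
      = (Ici 0).indicator (fun x => r * (f x * exp (-(r * x)))) := by
    ext x
    rw [exponentialPDF_eq, ENNReal.toReal_ofReal (by split_ifs <;> positivity)]
    by_cases hx : 0 ≤ x <;> simp [hx, mul_left_comm]
  rw [show expMeasure r = volume.withDensity (exponentialPDF r) from rfl,
    integrable_withDensity_iff
      (show Measurable (exponentialPDF r) from (measurable_exponentialPDFReal r).ennreal_ofReal)
      (.of_forall fun _ => ENNReal.ofReal_lt_top), hpdf,
    integrable_indicator_iff measurableSet_Ici, integrableOn_Ici_iff_integrableOn_Ioi]
  exact hf.const_mul r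

theorem integrable_log_expMeasure (hr : 0 < r) : Integrable log (expMeasure r) := by
  refine integrable_expMeasure_of_integrableOn hr ?_
  have hI {s : ℝ} (hs : -1 < s) : IntegrableOn (fun x : ℝ => x ^ s * exp (-(r * x))) (Ioi 0) := by
    simpa [neg_mul] using integrableOn_rpow_mul_exp_neg_mul_rpow hs one_pos hr
  refine (((hI (s := -(1 / 2)) (by norm_num)).const_mul 2).add (hI (s := 1) (by norm_num))).mono'
    (by fun_prop) ?_
  filter_upwards [ae_restrict_mem measurableSet_Ioi] with x hx
  rw [norm_mul, norm_of_nonneg (exp_pos _).le, Pi.add_apply, rpow_one, ← mul_assoc, ← add_mul]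
  exact mul_le_mul_of_nonneg_right (abs_log_le_two_mul_rpow_neg_half_add_self hx) (exp_pos _).le

theorem integral_log_expMeasure (hr : 0 < r) :
    ∫ x, log x ∂expMeasure r = ∫ x, log x ∂expMeasure 1 - log r := by
  have := isProbabilityMeasure_expMeasure one_pos
  rw [← mul_one r, ← map_div_expMeasure one_pos hr,
    integral_map (by fun_prop) measurable_log.aestronglyMeasurable, mul_one,
    integral_congr_ae ((ae_pos_expMeasure one_pos).mono fun x hx => log_div hx.ne' hr.ne'),
    integral_sub (integrable_log_expMeasure one_pos) (integrable_const _)]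
  simp

section RandomVariables

variable {Ω : Type*} [MeasurableSpace Ω] {μ : Measure Ω} {X Y : Ω → ℝ} {s : ℝ}

theorem ae_pos_of_map_eq_expMeasure (hX : AEMeasurable X μ) (hr : 0 < r)
    (hlaw : μ.map X = expMeasure r) : ∀ᵐ ω ∂μ, 0 < X ω :=
  ae_of_ae_map hX (hlaw ▸ ae_pos_expMeasure hr)

theorem integrable_log_of_map_eq_expMeasure (hX : AEMeasurable X μ) (hr : 0 < r)
    (hlaw : μ.map X = expMeasure r) : Integrable (fun ω => log (X ω)) μ :=
  (hlaw ▸ integrable_log_expMeasure hr).comp_aemeasurable hX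

theorem integral_log_of_map_eq_expMeasure (hX : AEMeasurable X μ) (hr : 0 < r)
    (hlaw : μ.map X = expMeasure r) :
    ∫ ω, log (X ω) ∂μ = ∫ x, log x ∂expMeasure 1 - log r := by
  rw [← integral_map hX measurable_log.aestronglyMeasurable, hlaw, integral_log_expMeasure hr]

theorem log_max_div_min_ae_eq (hX : ∀ᵐ ω ∂μ, 0 < X ω) (hY : ∀ᵐ ω ∂μ, 0 < Y ω) :
    (fun ω => log (max (X ω) (Y ω) / min (X ω) (Y ω)))
      =ᵐ[μ] fun ω => log (X ω) + log (Y ω) - 2 * log (min (X ω) (Y ω)) := by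
  filter_upwards [hX, hY] with ω hx hy
  exact log_max_div_min hx hy

variable [IsProbabilityMeasure μ]

theorem IndepFun.integrable_log_max_div_min (hX : Measurable X) (hY : Measurable Y)
    (hXY : IndepFun X Y μ) (hr : 0 < r) (hs : 0 < s)
    (hXlaw : μ.map X = expMeasure r) (hYlaw : μ.map Y = expMeasure s) :
    Integrable (fun ω => log (max (X ω) (Y ω) / min (X ω) (Y ω))) μ := by
  refine Integrable.congr ?_ (log_max_div_min_ae_eq (ae_pos_of_map_eq_expMeasure
    hX.aemeasurable hr hXlaw) (ae_pos_of_map_eq_expMeasure hY.aemeasurable hs hYlaw)).symm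
  exact ((integrable_log_of_map_eq_expMeasure hX.aemeasurable hr hXlaw).add
    (integrable_log_of_map_eq_expMeasure hY.aemeasurable hs hYlaw)).sub
    ((integrable_log_of_map_eq_expMeasure (hX.min hY).aemeasurable (add_pos hr hs)
      (hXY.map_min_eq_expMeasure hX hY hr hs hXlaw hYlaw)).const_mul 2)

theorem IndepFun.integral_log_max_div_min (hX : Measurable X) (hY : Measurable Y)
    (hXY : IndepFun X Y μ) (hr : 0 < r) (hs : 0 < s)
    (hXlaw : μ.map X = expMeasure r) (hYlaw : μ.map Y = expMeasure s) :
    ∫ ω, log (max (X ω) (Y ω) / min (X ω) (Y ω)) ∂μ = 2 * log (r + s) - log r - log s := by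
  have hlogX := integrable_log_of_map_eq_expMeasure hX.aemeasurable hr hXlaw
  have hlogY := integrable_log_of_map_eq_expMeasure hY.aemeasurable hs hYlaw
  have hlogXY : Integrable (fun ω => log (X ω) + log (Y ω)) μ := hlogX.add hlogY
  have hmin := hXY.map_min_eq_expMeasure hX hY hr hs hXlaw hYlaw
  rw [integral_congr_ae (log_max_div_min_ae_eq (ae_pos_of_map_eq_expMeasure
      hX.aemeasurable hr hXlaw) (ae_pos_of_map_eq_expMeasure hY.aemeasurable hs hYlaw)),
    integral_sub hlogXY ((integrable_log_of_map_eq_expMeasure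
      (hX.min hY).aemeasurable (add_pos hr hs) hmin).const_mul 2),
    integral_add hlogX hlogY, integral_const_mul,
    integral_log_of_map_eq_expMeasure hX.aemeasurable hr hXlaw,
    integral_log_of_map_eq_expMeasure hY.aemeasurable hs hYlaw,
    integral_log_of_map_eq_expMeasure (hX.min hY).aemeasurable (add_pos hr hs) hmin]
  ring

end RandomVariables

end ProbabilityTheory

theorem MeasureTheory.tendsto_integral_log_one_add_mul_sub_log_one_add_mul {Ω : Type*}
    [MeasurableSpace Ω] {μ : Measure Ω} {S T : Ω → ℝ} (hS : Measurable S) (hT : Measurable T)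
    (hT_pos : ∀ᵐ ω ∂μ, 0 < T ω) (hTS : ∀ᵐ ω ∂μ, T ω ≤ S ω)
    (hint : Integrable (fun ω => log (S ω / T ω)) μ) :
    Tendsto (fun a => ∫ ω, log (1 + a * S ω) - log (1 + a * T ω) ∂μ) atTop
      (𝓝 (∫ ω, log (S ω / T ω) ∂μ)) := by
  refine tendsto_integral_filter_of_dominated_convergence _ (.of_forall fun a => by fun_prop) ?_
    hint ?_
  · filter_upwards [eventually_ge_atTop 0] with a ha
    filter_upwards [hT_pos, hTS] with ω hT hTS
    exact abs_log_one_add_mul_sub_log_one_add_mul_le ha hT hTS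
  · filter_upwards [hT_pos, hTS] with ω hT hTS
    exact tendsto_log_one_add_mul_sub_log_one_add_mul (hT.trans_le hTS) hT

/-- If `E₁, E₂` are i.i.d. exponential(1), `S = max(E₁,E₂)`, `T = min(E₁,E₂)`,
then `E[log(1+(P/2)S) − log(1+(P/2)T)] → E[log(S/T)] = 2 ln 2` as `P → ∞`. -/
theorem stmt18 {Ω : Type*} [MeasurableSpace Ω] (μ : Measure Ω)
    [IsProbabilityMeasure μ] (E₁ E₂ : Ω → ℝ)
    (h1 : Measurable E₁) (h2 : Measurable E₂)
    (hlaw1 : μ.map E₁ = expMeasure 1) (hlaw2 : μ.map E₂ = expMeasure 1)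
    (hindep : IndepFun E₁ E₂ μ) :
    Tendsto (fun P : ℝ =>
        ∫ ω, (Real.log (1 + (P / 2) * max (E₁ ω) (E₂ ω))
                - Real.log (1 + (P / 2) * min (E₁ ω) (E₂ ω))) ∂μ)
      atTop (nhds (2 * Real.log 2)) ∧
    ∫ ω, Real.log (max (E₁ ω) (E₂ ω) / min (E₁ ω) (E₂ ω)) ∂μ
      = 2 * Real.log 2 := by
  have hlog : ∫ ω, log (max (E₁ ω) (E₂ ω) / min (E₁ ω) (E₂ ω)) ∂μ = 2 * log 2 := by
    rw [hindep.integral_log_max_div_min h1 h2 one_pos one_pos hlaw1 hlaw2]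
    norm_num
  refine ⟨?_, hlog⟩
  have hmin_pos : ∀ᵐ ω ∂μ, 0 < min (E₁ ω) (E₂ ω) := by
    filter_upwards [ae_pos_of_map_eq_expMeasure h1.aemeasurable one_pos hlaw1,
      ae_pos_of_map_eq_expMeasure h2.aemeasurable one_pos hlaw2] with ω hE₁ hE₂
    exact lt_min hE₁ hE₂
  rw [← hlog]
  exact (tendsto_integral_log_one_add_mul_sub_log_one_add_mul (h1.max h2) (h1.min h2) hmin_pos
    (.of_forall fun _ => min_le_max)
    (hindep.integrable_log_max_div_min h1 h2 one_pos one_pos hlaw1 hlaw2)).comp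
    (tendsto_id.atTop_div_const two_pos)
end
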